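/- arXiv:2212.09876 — 7 statements merged into one kernel-verified Lean document; each statement's English description precedes it below -/
import Mathlib

section
/- Let m ≥ 1 be a natural number, let 1 ≤ ℓ ≤ m, and let G be a graph with vertices x_0, x_1, ..., x_{m-1} and y_1, y_2, ..., y_m (not necessarily distinct), and let F_0, F_m be subsets of the edge set of G. If the number of edges of F_0 between x_0 and {y_1,...,y_m} plus the number of edges of F_m between y_m and {x_0,...,x_{m-1}} is at least m + ℓ, then there exists an index i with ℓ ≤ i ≤ m such that the edge x_0 y_i belongs to F_0 and the edge x_{i-ℓ} y_m belongs to F_m. -/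
open Sym2 in
/-- Fact 1 (Dirac-type counting argument): if the number of `F₀`-edges between `x 0` and
`Y = {y 1, …, y m}` plus the number of `F_m`-edges between `y m` and `X = {x 0, …, x (m-1)}`
is at least `m + ℓ`, then there is an index `ℓ ≤ i ≤ m` with `x 0 y i ∈ F₀` and
`x (i - ℓ) y m ∈ F_m`. -/
theorem stmt_0 {V : Type*} [Fintype V] (G : SimpleGraph V)
    (m ℓ : ℕ) (hm : 1 ≤ m) (hℓ1 : 1 ≤ ℓ) (hℓm : ℓ ≤ m)
    (x y : ℕ → V) (F0 Fm : Set (Sym2 V))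
    (hF0 : F0 ⊆ G.edgeSet) (hFm : Fm ⊆ G.edgeSet)
    (hcount : m + ℓ ≤
        {w | w ∈ y '' Set.Icc 1 m ∧ s(x 0, w) ∈ F0}.ncard +
        {w | w ∈ x '' Set.Iio m ∧ s(w, y m) ∈ Fm}.ncard) :
    ∃ i, ℓ ≤ i ∧ i ≤ m ∧ s(x 0, y i) ∈ F0 ∧ s(x (i - ℓ), y m) ∈ Fm := by
  classical
  set A : Finset ℕ := (Finset.Icc 1 m).filter (fun i => s(x 0, y i) ∈ F0) with hA
  set B : Finset ℕ := (Finset.range m).filter (fun j => s(x j, y m) ∈ Fm) with hB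
  have h1 : {w | w ∈ y '' Set.Icc 1 m ∧ s(x 0, w) ∈ F0} = y '' (↑A : Set ℕ) := by
    ext w
    simp only [Set.mem_setOf_eq, Set.mem_image, hA, Finset.coe_filter, Finset.mem_Icc,
      Set.mem_Icc, Set.mem_setOf_eq]
    constructor
    · rintro ⟨⟨i, hi, rfl⟩, hP⟩; exact ⟨i, ⟨hi, hP⟩, rfl⟩
    · rintro ⟨i, ⟨hi, hP⟩, rfl⟩; exact ⟨⟨i, hi, rfl⟩, hP⟩
  have h2 : {w | w ∈ x '' Set.Iio m ∧ s(w, y m) ∈ Fm} = x '' (↑B : Set ℕ) := by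
    ext w
    simp only [Set.mem_setOf_eq, Set.mem_image, hB, Finset.coe_filter, Finset.mem_range,
      Set.mem_Iio, Set.mem_setOf_eq]
    constructor
    · rintro ⟨⟨i, hi, rfl⟩, hP⟩; exact ⟨i, ⟨hi, hP⟩, rfl⟩
    · rintro ⟨i, ⟨hi, hP⟩, rfl⟩; exact ⟨⟨i, hi, rfl⟩, hP⟩
  have hc1 : {w | w ∈ y '' Set.Icc 1 m ∧ s(x 0, w) ∈ F0}.ncard ≤ A.card := by
    rw [h1]
    calc (y '' (↑A : Set ℕ)).ncard ≤ (↑A : Set ℕ).ncard := Set.ncard_image_le A.finite_toSet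
      _ = A.card := Set.ncard_coe_finset A
  have hc2 : {w | w ∈ x '' Set.Iio m ∧ s(w, y m) ∈ Fm}.ncard ≤ B.card := by
    rw [h2]
    calc (x '' (↑B : Set ℕ)).ncard ≤ (↑B : Set ℕ).ncard := Set.ncard_image_le B.finite_toSet
      _ = B.card := Set.ncard_coe_finset B
  have hcard : m + ℓ ≤ A.card + B.card := le_trans hcount (by omega)
  -- shift B by ℓ
  set B' : Finset ℕ := B.image (· + ℓ) with hB'
  have hB'card : B'.card = B.card := Finset.card_image_of_injective _ (add_left_injective ℓ)
  have hsub : A ∪ B' ⊆ Finset.Icc 1 (m + ℓ - 1) := by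
    intro i hi
    rcases Finset.mem_union.mp hi with h | h
    · have := Finset.mem_filter.mp h
      have := Finset.mem_Icc.mp this.1
      exact Finset.mem_Icc.mpr (by omega)
    · rcases Finset.mem_image.mp h with ⟨j, hj, rfl⟩
      have := Finset.mem_range.mp (Finset.mem_filter.mp hj).1
      exact Finset.mem_Icc.mpr (by omega)
  have hnotdisj : ¬ Disjoint A B' := by
    intro hd
    have := Finset.card_union_of_disjoint hd
    have hle := Finset.card_le_card hsub
    rw [this, hB'card] at hle
    have : (Finset.Icc 1 (m + ℓ - 1)).card = m + ℓ - 1 := by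
      rw [Nat.card_Icc]; omega
    omega
  rcases Finset.not_disjoint_iff.mp hnotdisj with ⟨i, hiA, hiB'⟩
  rcases Finset.mem_image.mp hiB' with ⟨j, hjB, rfl⟩
  have hjm := Finset.mem_range.mp (Finset.mem_filter.mp hjB).1
  have hjF := (Finset.mem_filter.mp hjB).2
  have hiIcc := Finset.mem_Icc.mp (Finset.mem_filter.mp hiA).1
  have hiF := (Finset.mem_filter.mp hiA).2
  refine ⟨j + ℓ, by omega, by omega, hiF, ?_⟩
  have : j + ℓ - ℓ = j := by omega
  rw [this]; exact hjF
end

section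
/- For every natural number k, every oriented graph D with minimum semidegree δ⁰(D) ≥ k contains every orientation of the path with k edges. -/
/-- Out-degree of `v` in the digraph given by the edge relation `D`. -/
noncomputable def outDeg {V : Type*} (D : V → V → Prop) (v : V) : ℕ := {w | D v w}.ncard

/-- In-degree of `v` in the digraph given by the edge relation `D`. -/
noncomputable def inDeg {V : Type*} (D : V → V → Prop) (v : V) : ℕ := {w | D w v}.ncard

/-- `D` is an oriented graph: for each pair of vertices, at most one of the edges
`uv`, `vu` is present (in particular there are no loops). -/
def IsOriented {V : Type*} (D : V → V → Prop) : Prop := ∀ u v, D u v → ¬ D v u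

/-- The number of (directed) edges of the digraph `D`. -/
noncomputable def edgeCount {V : Type*} (D : V → V → Prop) : ℕ := {p : V × V | D p.1 p.2}.ncard

/-- The minimum pseudo-semidegree of `D` is at least `x`: `D` has an edge, and every
vertex has out-degree `0` or at least `x`, and in-degree `0` or at least `x`. -/
def PseudoGE {V : Type*} (D : V → V → Prop) (x : ℝ) : Prop :=
  (∃ u v, D u v) ∧
    ∀ v, (outDeg D v = 0 ∨ x ≤ (outDeg D v : ℝ)) ∧ (inDeg D v = 0 ∨ x ≤ (inDeg D v : ℝ))

/-- The minimum pseudo-semidegree of `D` is strictly greater than `x`. -/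
def PseudoGT {V : Type*} (D : V → V → Prop) (x : ℝ) : Prop :=
  (∃ u v, D u v) ∧
    ∀ v, (outDeg D v = 0 ∨ x < (outDeg D v : ℝ)) ∧ (inDeg D v = 0 ∨ x < (inDeg D v : ℝ))

/-- `f, g` describe an antidirected path `f 0, f 1, ..., f m` (of length `m`) in `D`:
`g i = true` iff the `i`-th edge is directed from `f i` towards `f (i+1)`, and consecutive
edges alternate in direction (equivalently, every vertex of the path has out-degree `0`
or in-degree `0` on the path). -/
def IsAntipath {V : Type*} (D : V → V → Prop) (m : ℕ) (f : ℕ → V) (g : ℕ → Bool) : Prop :=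
  Set.InjOn f (Set.Iic m) ∧
  (∀ i < m, if g i then D (f i) (f (i + 1)) else D (f (i + 1)) (f i)) ∧
  (∀ i, i + 1 < m → g i ≠ g (i + 1))

/-- `D` contains each of the (at most two) antidirected paths of length `k`:
for each initial direction `b` there is an antidirected path of length `k`
whose first edge has direction `b`. -/
def ContainsAllAntipaths {V : Type*} (D : V → V → Prop) (k : ℕ) : Prop :=
  ∀ b : Bool, ∃ f g, IsAntipath D k f g ∧ g 0 = b

/-- `f` describes an antidirected cycle of length `n` in `D`: the `i`-th edge joins
`f i` and `f (i+1)` and is directed from `f i` iff `g i = true`; every vertex `f i`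
has out-degree `0` on the cycle (i.e. `g i = false ∧ g (i-1) = true`) or in-degree `0`
on the cycle (i.e. `g i = true ∧ g (i-1) = false`). -/
def IsAnticycle {V : Type*} (D : V → V → Prop) (n : ℕ) [NeZero n] (f : ZMod n → V) : Prop :=
  3 ≤ n ∧ Function.Injective f ∧
  ∃ g : ZMod n → Bool,
    (∀ i, if g i then D (f i) (f (i + 1)) else D (f (i + 1)) (f i)) ∧
    (∀ i : ZMod n, (g i = false ∧ g (i - 1) = true) ∨ (g i = true ∧ g (i - 1) = false))

/-! Greedy embedding: the endpoint of a partial embedding with `m < k` edges has at least `k`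
neighbours in the required direction, none of them the endpoint itself, while only `m` other
vertices are used; so the path can always be extended by a fresh vertex. -/

theorem IsOriented.irrefl {V : Type*} {D : V → V → Prop} (hor : IsOriented D) (v : V) :
    ¬ D v v :=
  fun h ↦ hor v v h h

def dirNbhd {V : Type*} (D : V → V → Prop) (b : Bool) (v : V) : Set V :=
  {w | if b then D v w else D w v}

theorem le_ncard_dirNbhd {V : Type*} {D : V → V → Prop} {k : ℕ}
    (hdeg : ∀ v, k ≤ outDeg D v ∧ k ≤ inDeg D v) (b : Bool) (v : V) :
    k ≤ (dirNbhd D b v).ncard := by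
  cases b
  · exact (hdeg v).2
  · exact (hdeg v).1

theorem exists_mem_dirNbhd_notMem {V : Type*} {D : V → V → Prop} (hor : IsOriented D)
    {b : Bool} {v : V} {S : Set V} (hS : S.Finite) (hv : v ∈ S)
    (hcard : S.ncard ≤ (dirNbhd D b v).ncard) :
    ∃ w ∈ dirNbhd D b v, w ∉ S := by
  have hlt : (S \ {v}).ncard < (dirNbhd D b v).ncard :=
    (Set.ncard_sdiff_singleton_lt_of_mem hv hS).trans_le hcard
  obtain ⟨w, hw, hwS⟩ := Set.exists_mem_notMem_of_ncard_lt_ncard hlt hS.sdiff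
  have hwv : w ≠ v := by
    rintro rfl
    cases b <;> exact hor.irrefl w hw
  exact ⟨w, hw, fun h ↦ hwS ⟨h, hwv⟩⟩

def EmbedsPath {V : Type*} (D : V → V → Prop) (g : ℕ → Bool) (m : ℕ) (f : ℕ → V) : Prop :=
  Set.InjOn f (Set.Iic m) ∧ ∀ i < m, if g i then D (f i) (f (i + 1)) else D (f (i + 1)) (f i)

theorem EmbedsPath.extend {V : Type*} {D : V → V → Prop} {g : ℕ → Bool} {m : ℕ} {f : ℕ → V}
    (hf : EmbedsPath D g m f) {w : V} (hw : w ∈ dirNbhd D (g m) (f m))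
    (hfresh : w ∉ f '' Set.Iic m) :
    EmbedsPath D g (m + 1) (Function.update f (m + 1) w) := by
  set f' := Function.update f (m + 1) w
  have hagree : Set.EqOn f' f (Set.Iic m) := fun i hi ↦
    Function.update_of_ne (by simp only [Set.mem_Iic] at hi; omega) _ _
  have hnew : f' (m + 1) = w := Function.update_self ..
  have hIic : Set.Iic (m + 1) = insert (m + 1) (Set.Iic m) := Order.Iic_succ m
  refine ⟨?_, fun i hi ↦ ?_⟩
  · rw [hIic, Set.injOn_insert (by simp), hagree.image_eq, hnew]
    exact ⟨hf.1.congr hagree.symm, hfresh⟩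
  · rcases Nat.lt_succ_iff_lt_or_eq.mp hi with hi | rfl
    · rw [hagree (Set.mem_Iic.mpr hi.le), hagree (Set.mem_Iic.mpr hi)]
      exact hf.2 i hi
    · rw [hagree (Set.mem_Iic.mpr le_rfl), hnew]
      exact hw

theorem exists_embedsPath {V : Type*} [Nonempty V] {D : V → V → Prop} (hor : IsOriented D)
    {k : ℕ} (hdeg : ∀ v, k ≤ outDeg D v ∧ k ≤ inDeg D v) (g : ℕ → Bool) :
    ∀ m ≤ k, ∃ f, EmbedsPath D g m f
  | 0, _ => ⟨fun _ ↦ Classical.arbitrary V, by simp [EmbedsPath, Set.InjOn]⟩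
  | m + 1, hm => by
    obtain ⟨f, hf⟩ := exists_embedsPath hor hdeg g m (by omega)
    have hS : (f '' Set.Iic m).Finite := (Set.finite_Iic m).image f
    have hcard : (f '' Set.Iic m).ncard ≤ (dirNbhd D (g m) (f m)).ncard :=
      calc (f '' Set.Iic m).ncard ≤ (Set.Iic m).ncard := Set.ncard_image_le (Set.finite_Iic m)
        _ = m + 1 := by simp
        _ ≤ k := hm
        _ ≤ _ := le_ncard_dirNbhd hdeg (g m) (f m)
    obtain ⟨w, hw, hfresh⟩ :=
      exists_mem_dirNbhd_notMem hor hS ⟨m, Set.mem_Iic.mpr le_rfl, rfl⟩ hcard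
    exact ⟨_, hf.extend hw hfresh⟩

theorem stmt_3_general {V : Type*} [Nonempty V] (D : V → V → Prop)
    (hor : IsOriented D) (k : ℕ)
    (hdeg : ∀ v, k ≤ outDeg D v ∧ k ≤ inDeg D v) :
    ∀ g : ℕ → Bool, ∃ f : ℕ → V, Set.InjOn f (Set.Iic k) ∧
      ∀ i < k, if g i then D (f i) (f (i + 1)) else D (f (i + 1)) (f i) :=
  fun g ↦ exists_embedsPath hor hdeg g k le_rfl

/-- Every oriented graph with minimum semidegree at least `k` contains every
orientation of the path with `k` edges. -/
theorem stmt_3 {V : Type*} [Fintype V] [Nonempty V] (D : V → V → Prop)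
    (hor : IsOriented D) (k : ℕ)
    (hdeg : ∀ v, k ≤ outDeg D v ∧ k ≤ inDeg D v) :
    ∀ g : ℕ → Bool, ∃ f : ℕ → V, Set.InjOn f (Set.Iic k) ∧
      ∀ i < k, if g i then D (f i) (f (i + 1)) else D (f (i + 1)) (f i) :=
  stmt_3_general D hor k hdeg
end

section
/- Let ℓ be a natural number. If a digraph D has more than ℓ·|V(D)| edges, then D contains a (nonempty) subdigraph D' with minimum pseudo-semidegree at least (ℓ+1)/2. -/
section
variable {V : Type*} [Fintype V]

private lemma edge_split_out (D' : V → V → Prop) (v : V) :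
    edgeCount D' = edgeCount (fun u w => D' u w ∧ u ≠ v) + outDeg D' v := by
  classical
  have h1 : {p : V × V | D' p.1 p.2} =
      {p : V × V | D' p.1 p.2 ∧ p.1 ≠ v} ∪ {p : V × V | D' p.1 p.2 ∧ p.1 = v} := by
    ext ⟨a, b⟩; by_cases h : a = v <;> simp [h]
  have h2 : {p : V × V | D' p.1 p.2 ∧ p.1 = v} = (fun w => (v, w)) '' {w | D' v w} := by
    ext ⟨a, b⟩
    simp only [Set.mem_setOf_eq, Set.mem_image]
    constructor
    · rintro ⟨h, rfl⟩; exact ⟨b, h, rfl⟩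
    · rintro ⟨w, hw, h⟩; cases h; exact ⟨hw, rfl⟩
  have hdisj : Disjoint {p : V × V | D' p.1 p.2 ∧ p.1 ≠ v} {p : V × V | D' p.1 p.2 ∧ p.1 = v} := by
    rw [Set.disjoint_left]; rintro ⟨a, b⟩ ⟨_, h⟩ ⟨_, h'⟩; exact h h'
  have hinj : Function.Injective (fun w : V => (v, w)) := fun a b h => by
    simpa using h
  rw [edgeCount, h1, Set.ncard_union_eq hdisj (Set.toFinite _) (Set.toFinite _), h2,
    Set.ncard_image_of_injective _ hinj]
  rfl

private lemma edge_split_in (D' : V → V → Prop) (v : V) :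
    edgeCount D' = edgeCount (fun u w => D' u w ∧ w ≠ v) + inDeg D' v := by
  classical
  have h1 : {p : V × V | D' p.1 p.2} =
      {p : V × V | D' p.1 p.2 ∧ p.2 ≠ v} ∪ {p : V × V | D' p.1 p.2 ∧ p.2 = v} := by
    ext ⟨a, b⟩; by_cases h : b = v <;> simp [h]
  have h2 : {p : V × V | D' p.1 p.2 ∧ p.2 = v} = (fun w => (w, v)) '' {w | D' w v} := by
    ext ⟨a, b⟩
    simp only [Set.mem_setOf_eq, Set.mem_image]
    constructor
    · rintro ⟨h, rfl⟩; exact ⟨a, h, rfl⟩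
    · rintro ⟨w, hw, h⟩; cases h; exact ⟨hw, rfl⟩
  have hdisj : Disjoint {p : V × V | D' p.1 p.2 ∧ p.2 ≠ v} {p : V × V | D' p.1 p.2 ∧ p.2 = v} := by
    rw [Set.disjoint_left]; rintro ⟨a, b⟩ ⟨_, h⟩ ⟨_, h'⟩; exact h h'
  have hinj : Function.Injective (fun w : V => (w, v)) := fun a b h => by
    simpa using h
  rw [edgeCount, h1, Set.ncard_union_eq hdisj (Set.toFinite _) (Set.toFinite _), h2,
    Set.ncard_image_of_injective _ hinj]
  rfl

end

section
variable {V : Type*} [Fintype V]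

private lemma zcard_le (S : Set V) : S.ncard ≤ Fintype.card V := by
  have := Set.ncard_le_ncard (Set.subset_univ S) (Set.toFinite _)
  simpa [Set.ncard_univ, Nat.card_eq_fintype_card] using this

private lemma main_aux (ℓ : ℕ) : ∀ N : ℕ, ∀ D' : V → V → Prop,
    edgeCount D' ≤ N →
    ℓ * Fintype.card V <
      edgeCount D' + (ℓ / 2) * ({v | outDeg D' v = 0}.ncard + {v | inDeg D' v = 0}.ncard) →
    ∃ D'' : V → V → Prop, (∀ u v, D'' u v → D' u v) ∧
      (∃ u v, D'' u v) ∧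
      (∀ v, (outDeg D'' v = 0 ∨ ℓ + 1 ≤ 2 * outDeg D'' v) ∧
            (inDeg D'' v = 0 ∨ ℓ + 1 ≤ 2 * inDeg D'' v)) := by
  intro N
  induction N with
  | zero =>
    intro D' hle hinv
    exfalso
    have h0 : edgeCount D' = 0 := Nat.le_zero.mp hle
    have hz : {v | outDeg D' v = 0}.ncard + {v | inDeg D' v = 0}.ncard ≤ 2 * Fintype.card V := by
      have := zcard_le {v | outDeg D' v = 0}
      have := zcard_le {v | inDeg D' v = 0}
      omega
    have : (ℓ / 2) * ({v | outDeg D' v = 0}.ncard + {v | inDeg D' v = 0}.ncard)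
        ≤ ℓ * Fintype.card V := by
      calc (ℓ / 2) * ({v | outDeg D' v = 0}.ncard + {v | inDeg D' v = 0}.ncard)
          ≤ (ℓ / 2) * (2 * Fintype.card V) := Nat.mul_le_mul_left _ hz
        _ = (ℓ / 2 * 2) * Fintype.card V := by ring
        _ ≤ ℓ * Fintype.card V := Nat.mul_le_mul_right _ (Nat.div_mul_le_self ℓ 2)
    omega
  | succ N ih =>
    intro D' hle hinv
    by_cases hbadO : ∃ v, 0 < outDeg D' v ∧ 2 * outDeg D' v ≤ ℓ
    · obtain ⟨v, hv1, hv2⟩ := hbadO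
      set E : V → V → Prop := fun u w => D' u w ∧ u ≠ v with hE
      have hsplit := edge_split_out D' v
      have hdle : outDeg D' v ≤ ℓ / 2 := Nat.le_div_iff_mul_le two_pos |>.mpr (by omega)
      have houtE : ∀ u, u ≠ v → outDeg E u = outDeg D' u := by
        intro u hu
        unfold outDeg
        congr 1
        ext w; simp [hE, hu]
      have houtEv : outDeg E v = 0 := by
        unfold outDeg
        simp [hE]
      have hzo : {u | outDeg D' u = 0}.ncard + 1 ≤ {u | outDeg E u = 0}.ncard := by
        have hsub : insert v {u | outDeg D' u = 0} ⊆ {u | outDeg E u = 0} := by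
          rintro u hu
          rcases Set.mem_insert_iff.mp hu with rfl | hu
          · exact houtEv
          · rw [Set.mem_setOf_eq]
            by_cases h : u = v
            · subst h; exact houtEv
            · rw [houtE u h]; exact hu
        have hnotin : v ∉ {u | outDeg D' u = 0} := by
          simp only [Set.mem_setOf_eq]; omega
        have := Set.ncard_le_ncard hsub (Set.toFinite _)
        rwa [Set.ncard_insert_of_notMem hnotin (Set.toFinite _)] at this
      have hzi : {u | inDeg D' u = 0}.ncard ≤ {u | inDeg E u = 0}.ncard := by
        apply Set.ncard_le_ncard _ (Set.toFinite _)
        intro u hu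
        rw [Set.mem_setOf_eq] at hu ⊢
        have hsub : {w | E w u} ⊆ {w | D' w u} := fun w hw => hw.1
        have := Set.ncard_le_ncard hsub (Set.toFinite _)
        unfold inDeg at hu ⊢
        omega
      have hsplit' : edgeCount D' = edgeCount E + outDeg D' v := hsplit
      have key : (ℓ / 2) * ({v | outDeg D' v = 0}.ncard + {v | inDeg D' v = 0}.ncard) + ℓ / 2
          ≤ (ℓ / 2) * ({u | outDeg E u = 0}.ncard + {u | inDeg E u = 0}.ncard) := by
        have h := Nat.mul_le_mul_left (ℓ / 2)
          (show {v | outDeg D' v = 0}.ncard + {v | inDeg D' v = 0}.ncard + 1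
            ≤ {u | outDeg E u = 0}.ncard + {u | inDeg E u = 0}.ncard by omega)
        rw [Nat.mul_add, Nat.mul_one] at h
        exact h
      have hinv' : ℓ * Fintype.card V <
          edgeCount E + (ℓ / 2) * ({u | outDeg E u = 0}.ncard + {u | inDeg E u = 0}.ncard) := by
        omega
      have hEle : edgeCount E ≤ N := by omega
      obtain ⟨D'', hsub, h1, h2⟩ := ih E hEle hinv'
      exact ⟨D'', fun u w h => (hsub u w h).1, h1, h2⟩
    · by_cases hbadI : ∃ v, 0 < inDeg D' v ∧ 2 * inDeg D' v ≤ ℓ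
      · obtain ⟨v, hv1, hv2⟩ := hbadI
        set E : V → V → Prop := fun u w => D' u w ∧ w ≠ v with hE
        have hsplit := edge_split_in D' v
        have hdle : inDeg D' v ≤ ℓ / 2 := Nat.le_div_iff_mul_le two_pos |>.mpr (by omega)
        have hinE : ∀ u, u ≠ v → inDeg E u = inDeg D' u := by
          intro u hu
          unfold inDeg
          congr 1
          ext w; simp [hE, hu]
        have hinEv : inDeg E v = 0 := by
          unfold inDeg
          simp [hE]
        have hzo : {u | inDeg D' u = 0}.ncard + 1 ≤ {u | inDeg E u = 0}.ncard := by
          have hsub : insert v {u | inDeg D' u = 0} ⊆ {u | inDeg E u = 0} := by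
            rintro u hu
            rcases Set.mem_insert_iff.mp hu with rfl | hu
            · exact hinEv
            · rw [Set.mem_setOf_eq]
              by_cases h : u = v
              · subst h; exact hinEv
              · rw [hinE u h]; exact hu
          have hnotin : v ∉ {u | inDeg D' u = 0} := by
            simp only [Set.mem_setOf_eq]; omega
          have := Set.ncard_le_ncard hsub (Set.toFinite _)
          rwa [Set.ncard_insert_of_notMem hnotin (Set.toFinite _)] at this
        have hzi : {u | outDeg D' u = 0}.ncard ≤ {u | outDeg E u = 0}.ncard := by
          apply Set.ncard_le_ncard _ (Set.toFinite _)
          intro u hu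
          rw [Set.mem_setOf_eq] at hu ⊢
          have hsub : {w | E u w} ⊆ {w | D' u w} := fun w hw => hw.1
          have := Set.ncard_le_ncard hsub (Set.toFinite _)
          unfold outDeg at hu ⊢
          omega
        have hsplit' : edgeCount D' = edgeCount E + inDeg D' v := hsplit
        have key : (ℓ / 2) * ({v | outDeg D' v = 0}.ncard + {v | inDeg D' v = 0}.ncard) + ℓ / 2
            ≤ (ℓ / 2) * ({u | outDeg E u = 0}.ncard + {u | inDeg E u = 0}.ncard) := by
          have h := Nat.mul_le_mul_left (ℓ / 2)
            (show {v | outDeg D' v = 0}.ncard + {v | inDeg D' v = 0}.ncard + 1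
              ≤ {u | outDeg E u = 0}.ncard + {u | inDeg E u = 0}.ncard by omega)
          rw [Nat.mul_add, Nat.mul_one] at h
          exact h
        have hinv' : ℓ * Fintype.card V <
            edgeCount E + (ℓ / 2) * ({u | outDeg E u = 0}.ncard + {u | inDeg E u = 0}.ncard) := by
          omega
        have hEle : edgeCount E ≤ N := by omega
        obtain ⟨D'', hsub, h1, h2⟩ := ih E hEle hinv'
        exact ⟨D'', fun u w h => (hsub u w h).1, h1, h2⟩
      · -- no bad vertices: D' itself works
        push_neg at hbadO hbadI
        have hzbound : (ℓ / 2) * ({v | outDeg D' v = 0}.ncard + {v | inDeg D' v = 0}.ncard)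
            ≤ ℓ * Fintype.card V := by
          have hz : {v | outDeg D' v = 0}.ncard + {v | inDeg D' v = 0}.ncard
              ≤ 2 * Fintype.card V := by
            have := zcard_le {v | outDeg D' v = 0}
            have := zcard_le {v | inDeg D' v = 0}
            omega
          calc (ℓ / 2) * ({v | outDeg D' v = 0}.ncard + {v | inDeg D' v = 0}.ncard)
              ≤ (ℓ / 2) * (2 * Fintype.card V) := Nat.mul_le_mul_left _ hz
            _ = (ℓ / 2 * 2) * Fintype.card V := by ring
            _ ≤ ℓ * Fintype.card V := Nat.mul_le_mul_right _ (Nat.div_mul_le_self ℓ 2)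
        have hpos : 0 < edgeCount D' := by omega
        have hne : {p : V × V | D' p.1 p.2}.Nonempty := by
          rw [Set.nonempty_iff_ne_empty]
          intro h
          rw [edgeCount, h, Set.ncard_empty] at hpos
          omega
        obtain ⟨⟨a, b⟩, hab⟩ := hne
        refine ⟨D', fun _ _ h => h, ⟨a, b, hab⟩, fun w => ⟨?_, ?_⟩⟩
        · rcases Nat.eq_zero_or_pos (outDeg D' w) with h | h
          · exact Or.inl h
          · exact Or.inr (by have := hbadO w h; omega)
        · rcases Nat.eq_zero_or_pos (inDeg D' w) with h | h
          · exact Or.inl h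
          · exact Or.inr (by have := hbadI w h; omega)

end

/-- Lemma 4 (splitting lemma): a digraph with more than `ℓ·|V(D)|` edges contains a
(nonempty) subdigraph of minimum pseudo-semidegree at least `(ℓ+1)/2`. -/
theorem stmt_9 {V : Type*} [Fintype V] (D : V → V → Prop) (hloopless : ∀ v, ¬ D v v)
    (ℓ : ℕ) (hE : ℓ * Fintype.card V < edgeCount D) :
    ∃ D' : V → V → Prop, (∀ u v, D' u v → D u v) ∧
      PseudoGE D' (((ℓ : ℝ) + 1) / 2) := by
  obtain ⟨D', hsub, hedge, hdeg⟩ :=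
    main_aux ℓ (edgeCount D) D le_rfl (lt_of_lt_of_le hE (Nat.le_add_right _ _))
  refine ⟨D', hsub, hedge, fun v => ⟨?_, ?_⟩⟩
  · rcases (hdeg v).1 with h | h
    · exact Or.inl h
    · refine Or.inr ?_
      rw [div_le_iff₀ (by norm_num : (0:ℝ) < 2)]
      exact_mod_cast (by omega : ℓ + 1 ≤ outDeg D' v * 2)
  · rcases (hdeg v).2 with h | h
    · exact Or.inl h
    · refine Or.inr ?_
      rw [div_le_iff₀ (by norm_num : (0:ℝ) < 2)]
      exact_mod_cast (by omega : ℓ + 1 ≤ inDeg D' v * 2)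
end

section
/- Every connected graph on at least k+1 vertices with minimum degree strictly greater than (k-1)/2 contains a path of length k. -/
/-- Every connected graph on at least `k+1` vertices with minimum degree strictly
greater than `(k-1)/2` contains a path of length `k`. -/
theorem stmt_13 {V : Type*} [Fintype V] (G : SimpleGraph V) (k : ℕ)
    (hconn : G.Connected) (hcard : k + 1 ≤ Fintype.card V)
    (hdeg : ∀ v : V, ((k : ℝ) - 1) / 2 < ({w | G.Adj v w}.ncard : ℝ)) :
    ∃ f : ℕ → V, Set.InjOn f (Set.Iic k) ∧ ∀ i < k, G.Adj (f i) (f (i + 1)) := by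
  classical
  have hV : Nonempty V := Fintype.card_pos_iff.mp (by omega)
  set P : ℕ → Prop := fun n =>
    ∃ f : ℕ → V, Set.InjOn f (Set.Iic n) ∧ ∀ i < n, G.Adj (f i) (f (i+1)) with hPdef
  have hP0 : P 0 := by
    refine ⟨fun _ => Classical.arbitrary V, ?_, ?_⟩
    · intro a ha b hb _
      simp only [Set.mem_Iic, Nat.le_zero] at ha hb
      omega
    · intro i hi; exact absurd hi (by omega)
  have hcardP : ∀ n, P n → n + 1 ≤ Fintype.card V := by
    rintro n ⟨f, hf, -⟩
    have h1 : (Set.Iic n).ncard = n + 1 := by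
      rw [← Finset.coe_Iic, Set.ncard_coe_finset, Nat.card_Iic]
    have h2 : (f '' Set.Iic n).ncard = n + 1 := by
      rw [Set.ncard_image_of_injOn hf, h1]
    have h3 : (f '' Set.Iic n).ncard ≤ (Set.univ : Set V).ncard :=
      Set.ncard_le_ncard (Set.subset_univ _) Set.finite_univ
    rwa [h2, Set.ncard_univ, Nat.card_eq_fintype_card] at h3
  have hbig : ¬ P (Fintype.card V) := fun h => by
    have := hcardP _ h; omega
  have hex : ∃ n, ¬ P n := ⟨_, hbig⟩
  set m := Nat.find hex with hm
  have hmspec : ¬ P m := Nat.find_spec hex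
  have hm0 : m ≠ 0 := fun h => hmspec (h ▸ hP0)
  set l := m - 1 with hl
  have hPl : P l := by
    by_contra h
    have := Nat.find_min' hex h
    omega
  have hnext : ¬ P (l + 1) := by
    have h : l + 1 = m := by omega
    rwa [h]
  have hkl : k ≤ l := by
    by_contra hlk
    push_neg at hlk
    obtain ⟨f, hf, he⟩ := hPl
    set T := f '' Set.Iic l with hT
    have hnb0 : ∀ w, G.Adj (f 0) w → w ∈ T := by
      intro w hw
      by_contra hwT
      apply hnext
      refine ⟨fun j => if j = 0 then w else f (j - 1), ?_, ?_⟩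
      · intro a ha b hb hab
        simp only [Set.mem_Iic] at ha hb
        replace hab : (if a = 0 then w else f (a - 1)) = (if b = 0 then w else f (b - 1)) := hab
        by_cases ha0 : a = 0 <;> by_cases hb0 : b = 0
        · omega
        · rw [if_pos ha0, if_neg hb0] at hab
          exact absurd ⟨b - 1, Set.mem_Iic.mpr (by omega), hab.symm⟩ hwT
        · rw [if_neg ha0, if_pos hb0] at hab
          exact absurd ⟨a - 1, Set.mem_Iic.mpr (by omega), hab⟩ hwT
        · rw [if_neg ha0, if_neg hb0] at hab
          have := hf (Set.mem_Iic.mpr (by omega : a - 1 ≤ l))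
            (Set.mem_Iic.mpr (by omega : b - 1 ≤ l)) hab
          omega
      · intro i hi
        by_cases hi0 : i = 0
        · subst hi0
          simpa using hw.symm
        · show G.Adj (if i = 0 then w else f (i - 1)) (if i + 1 = 0 then w else f (i + 1 - 1))
          rw [if_neg hi0, if_neg (by omega : ¬ i + 1 = 0)]
          have h := he (i - 1) (by omega)
          rw [show i - 1 + 1 = i from by omega] at h
          rw [show i + 1 - 1 = i from by omega]
          exact h
    have hnbl : ∀ w, G.Adj (f l) w → w ∈ T := by
      intro w hw
      by_contra hwT
      apply hnext
      refine ⟨fun j => if j ≤ l then f j else w, ?_, ?_⟩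
      · intro a ha b hb hab
        simp only [Set.mem_Iic] at ha hb
        replace hab : (if a ≤ l then f a else w) = (if b ≤ l then f b else w) := hab
        by_cases ha0 : a ≤ l <;> by_cases hb0 : b ≤ l
        · rw [if_pos ha0, if_pos hb0] at hab
          exact hf (Set.mem_Iic.mpr ha0) (Set.mem_Iic.mpr hb0) hab
        · rw [if_pos ha0, if_neg hb0] at hab
          exact absurd ⟨a, Set.mem_Iic.mpr ha0, hab⟩ hwT
        · rw [if_neg ha0, if_pos hb0] at hab
          exact absurd ⟨b, Set.mem_Iic.mpr hb0, hab.symm⟩ hwT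
        · omega
      · intro i hi
        show G.Adj (if i ≤ l then f i else w) (if i + 1 ≤ l then f (i + 1) else w)
        by_cases hil : i < l
        · rw [if_pos (by omega : i ≤ l), if_pos (by omega : i + 1 ≤ l)]
          exact he i hil
        · have hieq : i = l := by omega
          rw [if_pos (by omega : i ≤ l), if_neg (by omega : ¬ i + 1 ≤ l), hieq]
          exact hw
    set A : Set ℕ := {i | i < l ∧ G.Adj (f 0) (f (i+1))} with hA
    set B : Set ℕ := {i | i < l ∧ G.Adj (f l) (f i)} with hB
    have hAcard : ({w | G.Adj (f 0) w}).ncard = A.ncard := by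
      have himg : {w | G.Adj (f 0) w} = (fun i => f (i+1)) '' A := by
        ext w
        constructor
        · intro hw
          obtain ⟨j, hj, rfl⟩ := hnb0 w hw
          simp only [Set.mem_Iic] at hj
          have hj0 : j ≠ 0 := by
            intro h; rw [h] at hw; exact hw.ne rfl
          refine ⟨j - 1, ⟨by omega, ?_⟩, ?_⟩
          · rw [show j - 1 + 1 = j from by omega]; exact hw
          · show f (j - 1 + 1) = f j
            rw [show j - 1 + 1 = j from by omega]
        · rintro ⟨i, ⟨hi, hadj⟩, rfl⟩
          exact hadj
      rw [himg]
      apply Set.ncard_image_of_injOn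
      intro a ha b hb hab
      have ha1 : a < l := ha.1
      have hb1 : b < l := hb.1
      have := hf (Set.mem_Iic.mpr (by omega : a + 1 ≤ l))
        (Set.mem_Iic.mpr (by omega : b + 1 ≤ l)) hab
      omega
    have hBcard : ({w | G.Adj (f l) w}).ncard = B.ncard := by
      have himg : {w | G.Adj (f l) w} = f '' B := by
        ext w
        constructor
        · intro hw
          obtain ⟨j, hj, rfl⟩ := hnbl w hw
          simp only [Set.mem_Iic] at hj
          have hjl : j ≠ l := by
            intro h; rw [h] at hw; exact hw.ne rfl
          exact ⟨j, ⟨by omega, hw⟩, rfl⟩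
        · rintro ⟨i, ⟨hi, hadj⟩, rfl⟩
          exact hadj
      rw [himg]
      apply Set.ncard_image_of_injOn
      intro a ha b hb hab
      have ha1 : a < l := ha.1
      have hb1 : b < l := hb.1
      exact hf (Set.mem_Iic.mpr (by omega : a ≤ l))
        (Set.mem_Iic.mpr (by omega : b ≤ l)) hab
    by_cases hcase : ∃ i, i ∈ A ∧ i ∈ B
    · obtain ⟨i, hiA, hiB⟩ := hcase
      have hil : i < l := hiA.1
      have hadj0 : G.Adj (f 0) (f (i+1)) := hiA.2
      have hadjl : G.Adj (f l) (f i) := hiB.2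
      set c : ℕ → V := fun j => if j ≤ i then f j else f (l + i + 1 - j) with hc
      have hcT : ∀ j, j ≤ l → c j ∈ T := by
        intro j hj
        simp only [hc]
        split_ifs with h
        · exact ⟨j, Set.mem_Iic.mpr hj, rfl⟩
        · exact ⟨l + i + 1 - j, Set.mem_Iic.mpr (by omega), rfl⟩
      have hcinj : Set.InjOn c (Set.Iic l) := by
        intro a ha b hb hab
        simp only [Set.mem_Iic] at ha hb
        simp only [hc] at hab
        split_ifs at hab with h1 h2 h2
        · exact hf (Set.mem_Iic.mpr (by omega)) (Set.mem_Iic.mpr (by omega)) hab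
        · have := hf (Set.mem_Iic.mpr (by omega)) (Set.mem_Iic.mpr (by omega)) hab
          omega
        · have := hf (Set.mem_Iic.mpr (by omega)) (Set.mem_Iic.mpr (by omega)) hab
          omega
        · have := hf (Set.mem_Iic.mpr (by omega)) (Set.mem_Iic.mpr (by omega)) hab
          omega
      have hce : ∀ j, j < l → G.Adj (c j) (c (j+1)) := by
        intro j hj
        rcases lt_trichotomy j i with h | h | h
        · simp only [hc, if_pos (by omega : j ≤ i), if_pos (by omega : j + 1 ≤ i)]
          exact he j hj
        · subst h
          simp only [hc, if_pos le_rfl, if_neg (by omega : ¬ j + 1 ≤ j)]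
          rw [show l + j + 1 - (j+1) = l from by omega]
          exact hadjl.symm
        · simp only [hc, if_neg (by omega : ¬ j ≤ i), if_neg (by omega : ¬ j + 1 ≤ i)]
          have h' := he (l + i - j) (by omega)
          rw [show l + i - j + 1 = l + i + 1 - j from by omega] at h'
          rw [show l + i + 1 - (j + 1) = l + i - j from by omega]
          exact h'.symm
      have hwrap : G.Adj (c l) (c 0) := by
        simp only [hc, if_neg (by omega : ¬ l ≤ i), if_pos (Nat.zero_le i)]
        rw [show l + i + 1 - l = i + 1 from by omega]
        exact hadj0.symm
      have hcsurj : ∀ j, j ≤ l → ∃ s, s ≤ l ∧ c s = f j := by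
        intro j hj
        by_cases h : j ≤ i
        · exact ⟨j, hj, by simp only [hc, if_pos h]⟩
        · refine ⟨l + i + 1 - j, by omega, ?_⟩
          simp only [hc, if_neg (by omega : ¬ l + i + 1 - j ≤ i)]
          rw [show l + i + 1 - (l + i + 1 - j) = j from by omega]
      have hTcard : T.ncard = l + 1 := by
        rw [hT, Set.ncard_image_of_injOn hf, ← Finset.coe_Iic, Set.ncard_coe_finset,
          Nat.card_Iic]
      have hexu : ∃ u, u ∉ T := by
        by_contra h
        push_neg at h
        have hsub : (Set.univ : Set V) ⊆ T := fun u _ => h u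
        have := Set.ncard_le_ncard hsub (Set.toFinite T)
        rw [Set.ncard_univ, Nat.card_eq_fintype_card, hTcard] at this
        omega
      obtain ⟨u, hu⟩ := hexu
      have hfT : f 0 ∈ T := ⟨0, Set.mem_Iic.mpr (Nat.zero_le l), rfl⟩
      obtain ⟨wlk⟩ := hconn.preconnected (f 0) u
      obtain ⟨d, -, hd1, hd2⟩ := wlk.exists_boundary_dart T hfT hu
      obtain ⟨j₀, hj₀, hfj₀⟩ := hd1
      simp only [Set.mem_Iic] at hj₀
      obtain ⟨s, hs, hcs⟩ := hcsurj j₀ hj₀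
      have hxy : G.Adj (c s) d.snd := by rw [hcs, hfj₀]; exact d.adj
      set r : ℕ → ℕ := fun t => if t ≤ l then t else t - (l+1) with hr
      have hrle : ∀ t, t ≤ 2*l + 1 → r t ≤ l := by
        intro t ht; simp only [hr]; split_ifs with h <;> omega
      have hstep : ∀ t, t ≤ 2*l → G.Adj (c (r t)) (c (r (t+1))) := by
        intro t ht
        rcases lt_trichotomy t l with h | h | h
        · simp only [hr, if_pos (by omega : t ≤ l), if_pos (by omega : t + 1 ≤ l)]
          exact hce t h
        · simp only [hr, if_pos (by omega : t ≤ l), if_neg (by omega : ¬ t + 1 ≤ l)]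
          rw [show t + 1 - (l + 1) = 0 from by omega, h]
          exact hwrap
        · simp only [hr, if_neg (by omega : ¬ t ≤ l), if_neg (by omega : ¬ t + 1 ≤ l)]
          rw [show t + 1 - (l + 1) = (t - (l+1)) + 1 from by omega]
          exact hce (t - (l+1)) (by omega)
      apply hnext
      refine ⟨fun j => if j = 0 then d.snd else c (r (s + j - 1)), ?_, ?_⟩
      · intro a ha b hb hab
        simp only [Set.mem_Iic] at ha hb
        replace hab : (if a = 0 then d.snd else c (r (s + a - 1)))
            = (if b = 0 then d.snd else c (r (s + b - 1))) := hab
        by_cases ha0 : a = 0 <;> by_cases hb0 : b = 0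
        · omega
        · rw [if_pos ha0, if_neg hb0] at hab
          have hmem := hcT (r (s + b - 1)) (hrle _ (by omega))
          rw [← hab] at hmem
          exact absurd hmem hd2
        · rw [if_neg ha0, if_pos hb0] at hab
          have hmem := hcT (r (s + a - 1)) (hrle _ (by omega))
          rw [hab] at hmem
          exact absurd hmem hd2
        · rw [if_neg ha0, if_neg hb0] at hab
          have hreq := hcinj (Set.mem_Iic.mpr (hrle _ (by omega)))
            (Set.mem_Iic.mpr (hrle _ (by omega))) hab
          simp only [hr] at hreq
          split_ifs at hreq <;> omega
      · intro j hj
        show G.Adj (if j = 0 then d.snd else c (r (s + j - 1)))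
          (if j + 1 = 0 then d.snd else c (r (s + (j + 1) - 1)))
        by_cases hj0 : j = 0
        · subst hj0
          rw [if_pos rfl, if_neg (by omega : ¬ (0:ℕ) + 1 = 0)]
          rw [show s + (0 + 1) - 1 = s from by omega]
          rw [show r s = s from by simp only [hr]; rw [if_pos hs]]
          exact hxy.symm
        · rw [if_neg hj0, if_neg (by omega : ¬ j + 1 = 0)]
          have h' := hstep (s + j - 1) (by omega)
          rw [show s + j - 1 + 1 = s + (j+1) - 1 from by omega] at h'
          exact h'
    · have hdisj : Disjoint A B := Set.disjoint_left.mpr fun {x} hx hy => hcase ⟨x, hx, hy⟩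
      have hsubA : A ⊆ Set.Iio l := fun x hx => hx.1
      have hsubB : B ⊆ Set.Iio l := fun x hx => hx.1
      have hun : (A ∪ B).ncard = A.ncard + B.ncard :=
        Set.ncard_union_eq hdisj ((Set.finite_Iio l).subset hsubA)
          ((Set.finite_Iio l).subset hsubB)
      have hle : (A ∪ B).ncard ≤ l := by
        have h := Set.ncard_le_ncard (Set.union_subset hsubA hsubB) (Set.finite_Iio l)
        rwa [show (Set.Iio l).ncard = l from by
          rw [← Finset.coe_range, Set.ncard_coe_finset, Finset.card_range]] at h
      have h0 := hdeg (f 0)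
      have hl' := hdeg (f l)
      rw [hAcard] at h0
      rw [hBcard] at hl'
      have hk : (k : ℝ) < ((A.ncard + B.ncard + 1 : ℕ) : ℝ) := by push_cast; linarith
      have := Nat.cast_lt.mp hk
      omega
  obtain ⟨f, hf, he⟩ := hPl
  exact ⟨f, hf.mono (Set.Iic_subset_Iic.mpr hkl), fun i hi => he i (lt_of_lt_of_le hi hkl)⟩
end

section
/- Let C_ℓ be the directed cycle of length ℓ ≥ 3, and k an even positive integer. Consider the blow-up D of C_ℓ where each vertex v is replaced by an independent set S_v of size k/2 and all edges from S_v to S_w are present whenever vw is an edge of C_ℓ. Then D is an oriented graph with minimum semidegree k/2 and D contains no antidirected path of length k. -/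

private lemma mod_succ_inj (ℓ x y : ℕ) (hx : x < ℓ) (hy : y < ℓ)
    (h : (x + 1) % ℓ = (y + 1) % ℓ) : x = y := by
  have h' : x % ℓ = y % ℓ := Nat.ModEq.add_right_cancel' 1 h
  rwa [Nat.mod_eq_of_lt hx, Nat.mod_eq_of_lt hy] at h'

private lemma range_fst_eq {n m : ℕ} (c : Fin n) :
    {w : Fin n × Fin m | w.1 = c} = Set.range (fun j : Fin m => (c, j)) := by
  ext w
  constructor
  · rintro h
    exact ⟨w.2, by ext <;> simp [h.symm]⟩
  · rintro ⟨j, rfl⟩; rfl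

private lemma ncard_fst_eq {n m : ℕ} (c : Fin n) :
    {w : Fin n × Fin m | w.1 = c}.ncard = m := by
  rw [range_fst_eq, ← Set.image_univ, Set.ncard_image_of_injective _ (by
    intro a b hab; simpa [Prod.ext_iff] using hab), Set.ncard_univ,
    Nat.card_eq_fintype_card, Fintype.card_fin]


/-- The blow-up of the directed cycle of length `ℓ ≥ 3` in which every vertex is replaced
by an independent set of size `k/2` (`k` even and positive) is an oriented graph with
minimum semidegree `k/2` (indeed every in- and out-degree equals `k/2`) and it contains
no antidirected path of length `k`. -/
theorem stmt_15 (ℓ k : ℕ) (hℓ : 3 ≤ ℓ) (hk : 0 < k) (hke : Even k) :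
    let D : (Fin ℓ × Fin (k / 2)) → (Fin ℓ × Fin (k / 2)) → Prop :=
      fun a b => (b.1 : ℕ) = ((a.1 : ℕ) + 1) % ℓ
    IsOriented D ∧ (∀ v, outDeg D v = k / 2 ∧ inDeg D v = k / 2) ∧
      ¬ ∃ f g, IsAntipath D k f g := by
  intro D
  have hℓ0 : 0 < ℓ := by omega
  refine ⟨?_, ?_, ?_⟩
  · -- oriented
    intro u v huv hvu
    have h1 : ((u.1 : ℕ)) = (((v.1 : ℕ) + 1) % ℓ) := hvu
    have h2 : ((v.1 : ℕ)) = (((u.1 : ℕ) + 1) % ℓ) := huv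
    have hu : (u.1 : ℕ) < ℓ := u.1.isLt
    rw [h2, Nat.mod_add_mod] at h1
    rcases lt_or_ge ((u.1 : ℕ) + 1 + 1) ℓ with h | h
    · rw [Nat.mod_eq_of_lt h] at h1; omega
    · have : ((u.1 : ℕ) + 1 + 1) % ℓ = (u.1 : ℕ) + 1 + 1 - ℓ := by
        rw [Nat.mod_eq_sub_mod h, Nat.mod_eq_of_lt (by omega)]
      omega
  · -- degrees
    intro v
    constructor
    · have hc : ((v.1 : ℕ) + 1) % ℓ < ℓ := Nat.mod_lt _ hℓ0
      have : {w : Fin ℓ × Fin (k / 2) | D v w} = {w | w.1 = ⟨_, hc⟩} := by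
        ext w
        simp only [Set.mem_setOf_eq, D, Fin.ext_iff]
      rw [outDeg, this, ncard_fst_eq]
    · have hc : ((v.1 : ℕ) + ℓ - 1) % ℓ < ℓ := Nat.mod_lt _ hℓ0
      have key : (((v.1 : ℕ) + ℓ - 1) % ℓ + 1) % ℓ = (v.1 : ℕ) := by
        rw [Nat.mod_add_mod]
        have : (v.1 : ℕ) + ℓ - 1 + 1 = (v.1 : ℕ) + ℓ := by omega
        rw [this, Nat.add_mod_right, Nat.mod_eq_of_lt v.1.isLt]
      have : {w : Fin ℓ × Fin (k / 2) | D w v} = {w | w.1 = ⟨_, hc⟩} := by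
        ext w
        simp only [Set.mem_setOf_eq, D, Fin.ext_iff]
        constructor
        · intro h
          exact mod_succ_inj ℓ _ _ w.1.isLt hc (by rw [key, ← h])
        · intro h
          rw [h, key]
      rw [inDeg, this, ncard_fst_eq]
  · -- no antipath
    rintro ⟨f, g, hinj, hedge, halt⟩
    -- step: layers repeat with period 2
    have step : ∀ i, i + 2 ≤ k → (f (i + 2)).1 = (f i).1 := by
      intro i hi
      have e1 := hedge i (by omega)
      have e2 := hedge (i + 1) (by omega)
      have ha := halt i (by omega)
      cases hgi : g i with
      | true =>
        rw [hgi] at e1 ha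
        have hgi1 : g (i + 1) = false := by
          cases h : g (i + 1) <;> simp_all
        rw [hgi1] at e2
        simp only [if_true, if_false] at e1 e2
        have h1 : ((f (i+1)).1 : ℕ) = (((f i).1 : ℕ) + 1) % ℓ := e1
        have h2 : ((f (i+1)).1 : ℕ) = (((f (i+1+1)).1 : ℕ) + 1) % ℓ := e2
        have := mod_succ_inj ℓ _ _ (f i).1.isLt (f (i+1+1)).1.isLt (h1 ▸ h2)
        have h3 : i + 1 + 1 = i + 2 := rfl
        rw [h3] at this
        exact Fin.ext this.symm
      | false =>
        rw [hgi] at e1 ha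
        have hgi1 : g (i + 1) = true := by
          cases h : g (i + 1) <;> simp_all
        rw [hgi1] at e2
        simp only [if_true, if_false] at e1 e2
        have h1 : ((f i).1 : ℕ) = (((f (i+1)).1 : ℕ) + 1) % ℓ := e1
        have h2 : ((f (i+1+1)).1 : ℕ) = (((f (i+1)).1 : ℕ) + 1) % ℓ := e2
        have h3 : i + 1 + 1 = i + 2 := rfl
        rw [h3] at h2
        exact Fin.ext (h2.trans h1.symm)
    have layers : ∀ j, 2 * j ≤ k → (f (2 * j)).1 = (f 0).1 := by
      intro j
      induction j with
      | zero => intro _; rfl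
      | succ n ih =>
        intro h
        have h2 : 2 * (n + 1) = 2 * n + 2 := by ring
        rw [h2]
        rw [step (2 * n) (by omega)]
        exact ih (by omega)
    -- injective map Fin (k/2+1) → Fin (k/2)
    have hk2 : 2 * (k / 2) = k := Nat.two_mul_div_two_of_even hke
    have hmap : Function.Injective (fun j : Fin (k / 2 + 1) => (f (2 * (j : ℕ))).2) := by
      intro a b hab
      simp only at hab
      have ha' : 2 * (a : ℕ) ≤ k := by have := a.isLt; omega
      have hb' : 2 * (b : ℕ) ≤ k := by have := b.isLt; omega
      have hfeq : f (2 * (a : ℕ)) = f (2 * (b : ℕ)) := by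
        have l1 := layers a ha'
        have l2 := layers b hb'
        exact Prod.ext (l1.trans l2.symm) hab
      have := hinj (Set.mem_Iic.2 ha') (Set.mem_Iic.2 hb') hfeq
      exact Fin.ext (by omega)
    have := Fintype.card_le_of_injective _ hmap
    simp [Fintype.card_fin] at this
end

section
/- Let D be an oriented graph, let P = v_0 v_1 ... v_m be an antidirected path in D of maximum length with v_0 v_1 ∈ E(D), and suppose for some index i with 2 ≤ i ≤ m that v_0 v_i ∈ E(D) and v_i v_{i-1} ∈ E(D). Then both the path P' = v_i v_{i+1} ... v_m v_{i-1} v_{i-2} ... v_1 v_0 (reading the vertices in this order) and the path P'' = v_i v_0 v_1 ... v_{i-1} v_m v_{m-1} ... v_{i+1} (or v_i v_0 v_1 ... v_{i-1} if i = m) are antidirected paths in D on the same vertex set as P. -/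
/-!
Write `v j = f j`. Since the first edge of `P` points forward and the last one backward, the
`j`-th edge points forward exactly when `j` is even, and `m` is even; orientedness together with
`v i → v (i-1)` forces `i` to be even as well. Both new vertex sequences are permutations of
`v 0, …, v m`, and each of their edges is either an edge of `P` met at a position of the same
parity (for a reversed segment because `m` and `i` are even), or one of the new edges
`v 0 → v i` and `v m → v (i-1)`, which sit exactly where the alternation needs them.
-/

open Set

def IsAntiwalk {V : Type*} (D : V → V → Prop) (m c : ℕ) (f : ℕ → V) : Prop :=
  ∀ j < m, if (j + c) % 2 = 0 then D (f j) (f (j + 1)) else D (f (j + 1)) (f j)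

/-- The index sequence of `P' = v i, …, v m, v (i-1), …, v 0`. -/
def suffixRevPrefix (m i j : ℕ) : ℕ := if i + j ≤ m then i + j else m - j

/-- The index sequence of `P'' = v i, v 0, …, v (i-1), v m, …, v (i+1)`. -/
def pivotPrefixRevSuffix (m i j : ℕ) : ℕ :=
  if j = 0 then i else if j ≤ i then j - 1 else m + i + 1 - j

section Index

variable {m i j : ℕ}

theorem suffixRevPrefix_of_le (h : i + j ≤ m) : suffixRevPrefix m i j = i + j := if_pos h

theorem suffixRevPrefix_of_lt (h : m < i + j) : suffixRevPrefix m i j = m - j :=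
  if_neg (by omega)

theorem pivotPrefixRevSuffix_zero : pivotPrefixRevSuffix m i 0 = i := rfl

theorem pivotPrefixRevSuffix_of_le (h₀ : 0 < j) (h : j ≤ i) :
    pivotPrefixRevSuffix m i j = j - 1 := by
  rw [pivotPrefixRevSuffix, if_neg (by omega), if_pos h]

theorem pivotPrefixRevSuffix_of_lt (h : i < j) :
    pivotPrefixRevSuffix m i j = m + i + 1 - j := by
  rw [pivotPrefixRevSuffix, if_neg (by omega), if_neg (by omega)]

theorem bijOn_suffixRevPrefix (him : i ≤ m) :
    BijOn (suffixRevPrefix m i) (Iic m) (Iic m) := by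
  refine ⟨fun j _ => ?_, fun a ha b hb hab => ?_, fun t ht => ?_⟩
  · simp only [suffixRevPrefix, mem_Iic]
    split <;> omega
  · simp only [suffixRevPrefix, mem_Iic] at ha hb hab
    split at hab <;> split at hab <;> omega
  · simp only [mem_Iic] at ht
    by_cases h : i ≤ t
    · refine ⟨t - i, by simp only [mem_Iic]; omega, ?_⟩
      simp only [suffixRevPrefix]
      split <;> omega
    · refine ⟨m - t, by simp only [mem_Iic]; omega, ?_⟩
      simp only [suffixRevPrefix]
      split <;> omega

theorem bijOn_pivotPrefixRevSuffix (him : i ≤ m) :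
    BijOn (pivotPrefixRevSuffix m i) (Iic m) (Iic m) := by
  refine ⟨fun j hj => ?_, fun a ha b hb hab => ?_, fun t ht => ?_⟩
  · simp only [pivotPrefixRevSuffix, mem_Iic] at hj ⊢
    split_ifs <;> omega
  · simp only [pivotPrefixRevSuffix, mem_Iic] at ha hb hab
    split_ifs at hab <;> omega
  · simp only [mem_Iic] at ht
    rcases lt_trichotomy t i with h | rfl | h
    · exact ⟨t + 1, by simp only [mem_Iic]; omega, pivotPrefixRevSuffix_of_le (by omega) h⟩
    · exact ⟨0, by simp, pivotPrefixRevSuffix_zero⟩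
    · refine ⟨m + i + 1 - t, by simp only [mem_Iic]; omega, ?_⟩
      rw [pivotPrefixRevSuffix_of_lt (by omega)]
      omega

end Index

section

variable {V : Type*} {D : V → V → Prop} {m : ℕ} {f : ℕ → V}

theorem IsAntipath.dir_eq {g : ℕ → Bool} (hP : IsAntipath D m f g) (h0 : g 0 = true) :
    ∀ j < m, g j = decide (j % 2 = 0)
  | 0, _ => by simpa using h0
  | j + 1, hj => by
    have hne := hP.2.2 j hj
    rw [hP.dir_eq h0 j (by omega)] at hne
    generalize g (j + 1) = b at hne ⊢
    cases b <;> simp at hne ⊢ <;> omega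

theorem IsAntipath.isAntiwalk {g : ℕ → Bool} (hP : IsAntipath D m f g) (h0 : g 0 = true) :
    IsAntiwalk D m 0 f := fun j hj => by
  simpa [hP.dir_eq h0 j hj] using hP.2.1 j hj

theorem IsAntipath.even_length {g : ℕ → Bool} (hP : IsAntipath D m f g) (h0 : g 0 = true)
    (hlast : g (m - 1) = false) : m % 2 = 0 := by
  rcases Nat.eq_zero_or_pos m with rfl | hm
  · rfl
  · have := hP.dir_eq h0 (m - 1) (by omega)
    simp only [hlast, Bool.false_eq, decide_eq_false_iff_not] at this
    omega

theorem isAntipath_of_isAntiwalk {c : ℕ} (hf : InjOn f (Iic m)) (hE : IsAntiwalk D m c f) :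
    IsAntipath D m f (fun j => decide ((j + c) % 2 = 0)) := by
  refine ⟨hf, fun j hj => by simpa using hE j hj, fun j _ => ?_⟩
  simp only [ne_eq, decide_eq_decide]
  omega

theorem exists_isAntipath_comp {c : ℕ} {σ : ℕ → ℕ} (hf : InjOn f (Iic m))
    (hσ : BijOn σ (Iic m) (Iic m)) (hE : IsAntiwalk D m c (f ∘ σ)) :
    ∃ g, IsAntipath D m (f ∘ σ) g ∧ (f ∘ σ) '' Iic m = f '' Iic m :=
  ⟨_, isAntipath_of_isAntiwalk (hf.comp hσ.injOn hσ.mapsTo) hE, by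
    rw [image_comp, hσ.image_eq]⟩

namespace IsAntiwalk

variable {k : ℕ}

theorem edge_of_mod_two_eq (hE : IsAntiwalk D m 0 f) (hk : k < m) {n : ℕ}
    (h : n % 2 = k % 2) : if n % 2 = 0 then D (f k) (f (k + 1)) else D (f (k + 1)) (f k) := by
  rw [h]
  exact hE k hk

theorem edge_of_mod_two_ne (hE : IsAntiwalk D m 0 f) (hk : k < m) {n : ℕ}
    (h : n % 2 ≠ k % 2) : if n % 2 = 0 then D (f (k + 1)) (f k) else D (f k) (f (k + 1)) := by
  have := hE k hk
  split_ifs at this ⊢ <;> first | assumption | omega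

theorem even_of_oriented {i : ℕ} (hE : IsAntiwalk D m 0 f) (hor : IsOriented D) (him : i ≤ m)
    (e : D (f i) (f (i - 1))) : i % 2 = 0 := by
  by_contra hi
  have := hE.edge_of_mod_two_eq (k := i - 1) (n := 0) (by omega) (by omega)
  rw [if_pos rfl, Nat.sub_add_cancel (by omega)] at this
  exact hor _ _ e this

theorem comp_suffixRevPrefix {i : ℕ} (hE : IsAntiwalk D m 0 f) (hm : m % 2 = 0)
    (hi : i % 2 = 0) (e : D (f m) (f (i - 1))) :
    IsAntiwalk D m 0 (f ∘ suffixRevPrefix m i) := by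
  intro j hj
  simp only [Function.comp_apply]
  rcases lt_trichotomy (i + j) m with h | h | h
  · rw [suffixRevPrefix_of_le h.le, suffixRevPrefix_of_le (by omega), ← add_assoc]
    exact hE.edge_of_mod_two_eq h (by omega)
  · rw [suffixRevPrefix_of_le h.le, suffixRevPrefix_of_lt (by omega), if_pos (by omega), h,
      show m - (j + 1) = i - 1 by omega]
    exact e
  · rw [suffixRevPrefix_of_lt h, suffixRevPrefix_of_lt (by omega)]
    have := hE.edge_of_mod_two_ne (k := m - (j + 1)) (n := j + 0) (by omega) (by omega)
    rwa [show m - (j + 1) + 1 = m - j by omega] at this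

theorem comp_pivotPrefixRevSuffix {i : ℕ} (hE : IsAntiwalk D m 0 f) (hm : m % 2 = 0)
    (hi : i % 2 = 0) (hi0 : 0 < i) (e₁ : D (f 0) (f i)) (e₂ : D (f m) (f (i - 1))) :
    IsAntiwalk D m 1 (f ∘ pivotPrefixRevSuffix m i) := by
  intro j hj
  simp only [Function.comp_apply]
  rcases Nat.eq_zero_or_pos j with rfl | hj0
  · rw [pivotPrefixRevSuffix_zero, pivotPrefixRevSuffix_of_le (j := 0 + 1) (by omega) hi0,
      if_neg (by omega)]
    exact e₁
  rcases lt_trichotomy j i with h | rfl | h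
  · rw [pivotPrefixRevSuffix_of_le hj0 h.le, pivotPrefixRevSuffix_of_le (j := j + 1) (by omega) h,
      Nat.add_sub_cancel]
    have := hE.edge_of_mod_two_eq (k := j - 1) (n := j + 1) (by omega) (by omega)
    rwa [Nat.sub_add_cancel hj0] at this
  · rw [pivotPrefixRevSuffix_of_le hj0 le_rfl, pivotPrefixRevSuffix_of_lt (by omega),
      if_neg (by omega), show m + j + 1 - (j + 1) = m by omega]
    exact e₂
  · rw [pivotPrefixRevSuffix_of_lt h, pivotPrefixRevSuffix_of_lt (by omega),
      show m + i + 1 - (j + 1) = m + i - j by omega]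
    have := hE.edge_of_mod_two_ne (k := m + i - j) (n := j + 1) (by omega) (by omega)
    rwa [show m + i - j + 1 = m + i + 1 - j by omega] at this

end IsAntiwalk

end

theorem stmt_17_general {V : Type*} (D : V → V → Prop) (hor : IsOriented D)
    (m i : ℕ) (f : ℕ → V) (g : ℕ → Bool)
    (hP : IsAntipath D m f g)
    (hfirst : g 0 = true) (hlast : g (m - 1) = false)
    (hi2 : 2 ≤ i) (him : i ≤ m)
    (e1 : D (f 0) (f i)) (e2 : D (f m) (f (i - 1))) (e3 : D (f i) (f (i - 1))) :
    (∃ g', IsAntipath D m (fun j => if i + j ≤ m then f (i + j) else f (m - j)) g' ∧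
      (fun j => if i + j ≤ m then f (i + j) else f (m - j)) '' Set.Iic m
        = f '' Set.Iic m) ∧
    (∃ g', IsAntipath D m
        (fun j => if j = 0 then f i else if j ≤ i then f (j - 1)
          else f (m + i + 1 - j)) g' ∧
      (fun j => if j = 0 then f i else if j ≤ i then f (j - 1)
          else f (m + i + 1 - j)) '' Set.Iic m = f '' Set.Iic m) := by
  have hE := hP.isAntiwalk hfirst
  have hm := hP.even_length hfirst hlast
  have hi := hE.even_of_oriented hor him e3
  have hP' : (fun j => if i + j ≤ m then f (i + j) else f (m - j)) = f ∘ suffixRevPrefix m i :=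
    funext fun j => (apply_ite f _ _ _).symm
  have hP'' : (fun j => if j = 0 then f i else if j ≤ i then f (j - 1) else f (m + i + 1 - j)) =
      f ∘ pivotPrefixRevSuffix m i := by
    funext j
    simp only [Function.comp_apply, pivotPrefixRevSuffix]
    split_ifs <;> rfl
  rw [hP', hP'']
  exact ⟨exists_isAntipath_comp hP.1 (bijOn_suffixRevPrefix him)
      (hE.comp_suffixRevPrefix hm hi e2),
    exists_isAntipath_comp hP.1 (bijOn_pivotPrefixRevSuffix him)
      (hE.comp_pivotPrefixRevSuffix hm hi (by omega) e1 e2)⟩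

/-- Path-rerouting step from the proof of Lemma 1: if `P = v 0 … v m` is a maximum-length
antidirected path in an oriented graph `D` whose first edge is `v 0 → v 1` and whose last
edge is `v m → v (m-1)`, and `2 ≤ i ≤ m` is such that `v 0 → v i`, `v m → v (i-1)` and
`v i → v (i-1)` are edges of `D`, then both
`P' = v i, v (i+1), …, v m, v (i-1), v (i-2), …, v 0` and
`P'' = v i, v 0, v 1, …, v (i-1), v m, v (m-1), …, v (i+1)` (which is
`v i, v 0, …, v (i-1)` when `i = m`) are antidirected paths in `D` on the same vertex
set as `P`. -/
theorem stmt_17 {V : Type*} [Fintype V] (D : V → V → Prop) (hor : IsOriented D)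
    (m i : ℕ) (f : ℕ → V) (g : ℕ → Bool)
    (hP : IsAntipath D m f g)
    (hmax : ∀ m' f' g', IsAntipath D m' f' g' → m' ≤ m)
    (hfirst : g 0 = true) (hlast : g (m - 1) = false)
    (hi2 : 2 ≤ i) (him : i ≤ m)
    (e1 : D (f 0) (f i)) (e2 : D (f m) (f (i - 1))) (e3 : D (f i) (f (i - 1))) :
    (∃ g', IsAntipath D m (fun j => if i + j ≤ m then f (i + j) else f (m - j)) g' ∧
      (fun j => if i + j ≤ m then f (i + j) else f (m - j)) '' Set.Iic m
        = f '' Set.Iic m) ∧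
    (∃ g', IsAntipath D m
        (fun j => if j = 0 then f i else if j ≤ i then f (j - 1)
          else f (m + i + 1 - j)) g' ∧
      (fun j => if j = 0 then f i else if j ≤ i then f (j - 1)
          else f (m + i + 1 - j)) '' Set.Iic m = f '' Set.Iic m) :=
  stmt_17_general D hor m i f g hP hfirst hlast hi2 him e1 e2 e3
end

section
/- Let D be an oriented graph and let C = v_0 v_1 ... v_m v_0 be an antidirected cycle in D with v_0 v_1, v_0 v_m ∈ E(D). Suppose there exists a vertex x outside C, a vertex y outside C, and an even index i with 2 ≤ i ≤ m such that v_0 v_i, v_{i-2} v_m, x v_i, and y x are edges of D. Then y x v_i v_0 v_1 ... v_{i-3} v_{i-2} v_m v_{m-1} ... v_{i+1} is an antidirected path of length m+1 in D. -/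
/-- Extension step from the proof of Lemma 3: if `C = v 0, v 1, …, v m, v 0` is an
antidirected cycle in an oriented graph `D` with `v 0 → v 1` and `v 0 → v m`, and there
are vertices `x, y` outside `C` and an even index `2 ≤ i ≤ m` such that `v 0 → v i`,
`v (i-2) → v m`, `x → v i` and `x → y` are edges of `D`, then
`y, x, v i, v 0, v 1, …, v (i-3), v (i-2), v m, v (m-1), …, v (i+1)` is an antidirected
path of length `m + 1` in `D`. -/
theorem stmt_18 {V : Type*} [Fintype V] (D : V → V → Prop) (hor : IsOriented D)
    (m : ℕ) (f : ZMod (m + 1) → V) (hC : IsAnticycle D (m + 1) f)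
    (e1 : D (f 0) (f 1)) (e2 : D (f 0) (f (m : ZMod (m + 1))))
    (x y : V) (hx : x ∉ Set.range f) (hy : y ∉ Set.range f)
    (i : ℕ) (hi2 : 2 ≤ i) (him : i ≤ m) (hieven : Even i)
    (e3 : D (f 0) (f (i : ZMod (m + 1))))
    (e4 : D (f ((i - 2 : ℕ) : ZMod (m + 1))) (f (m : ZMod (m + 1))))
    (e5 : D x (f (i : ZMod (m + 1)))) (e6 : D x y) :
    ∃ g, IsAntipath D (m + 1)
      (fun j => if j = 0 then y else if j = 1 then x
        else if j = 2 then f (i : ZMod (m + 1))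
        else if j ≤ i + 1 then f ((j - 3 : ℕ) : ZMod (m + 1))
        else f ((m + i + 2 - j : ℕ) : ZMod (m + 1))) g := by
  obtain ⟨h3, hinj, g, hg, halt⟩ := hC
  have hm2 : 2 ≤ m := by omega
  have hie : i % 2 = 0 := Nat.even_iff.mp hieven
  -- g alternates
  have hgsucc : ∀ k : ZMod (m+1), g (k + 1) = !g k := by
    intro k
    rcases halt (k + 1) with ⟨h1, h2⟩ | ⟨h1, h2⟩ <;> simp [h1] at h2 ⊢ <;> simp [h2]
  have hg0 : g 0 = true := by
    by_contra h
    rw [Bool.not_eq_true] at h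
    have h' := hg 0
    rw [h] at h'
    simp only [Bool.false_eq_true, if_false, zero_add] at h'
    exact hor _ _ e1 h'
  have hgk : ∀ k : ℕ, g (k : ZMod (m+1)) = decide (k % 2 = 0) := by
    intro k
    induction k with
    | zero => simpa using hg0
    | succ k ih =>
      have hc : ((k+1 : ℕ) : ZMod (m+1)) = (k : ZMod (m+1)) + 1 := by push_cast; ring
      rw [hc, hgsucc, ih]
      rcases Nat.mod_two_eq_zero_or_one k with h | h <;>
        simp [h, Nat.add_mod, -Nat.add_mod_right]
  have hmodd : m % 2 = 1 := by
    have h1 := hgk (m+1)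
    have h2 : ((m+1 : ℕ) : ZMod (m+1)) = 0 := by
      exact_mod_cast ZMod.natCast_self (m+1)
    rw [h2, hg0] at h1
    have h3' : (m+1) % 2 = 0 := of_decide_eq_true h1.symm
    omega
  have him' : i < m := by omega
  -- generic cycle edges
  have hfwd : ∀ k : ℕ, k % 2 = 0 → D (f (k : ZMod (m+1))) (f ((k+1 : ℕ) : ZMod (m+1))) := by
    intro k hk
    have h := hg (k : ZMod (m+1))
    rw [hgk k, hk] at h
    simp only [decide_eq_true_eq, if_pos rfl] at h
    simpa [Nat.cast_add, Nat.cast_one] using h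
  have hbwd : ∀ k : ℕ, k % 2 = 1 → D (f ((k+1 : ℕ) : ZMod (m+1))) (f (k : ZMod (m+1))) := by
    intro k hk
    have h := hg (k : ZMod (m+1))
    rw [hgk k, hk] at h
    simp only [decide_eq_true_eq] at h
    rw [if_neg (by omega)] at h
    simpa [Nat.cast_add, Nat.cast_one] using h
  -- cast injectivity
  have hfc : ∀ a b : ℕ, a ≤ m → b ≤ m → f (a : ZMod (m+1)) = f (b : ZMod (m+1)) → a = b := by
    intro a b ha hb h
    have h' := hinj h
    have ha' := ZMod.val_natCast_of_lt (show a < m + 1 by omega)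
    have hb' := ZMod.val_natCast_of_lt (show b < m + 1 by omega)
    rw [← ha', ← hb', h']
  have hxy : x ≠ y := by rintro rfl; exact hor x x e6 e6
  -- the index function
  set I : ℕ → ℕ := fun j => if j = 2 then i else if j ≤ i + 1 then j - 3 else m + i + 2 - j with hI
  have hP : ∀ j, 2 ≤ j →
      (if j = 0 then y else if j = 1 then x else if j = 2 then f (i : ZMod (m+1))
        else if j ≤ i + 1 then f ((j - 3 : ℕ) : ZMod (m+1))
        else f ((m + i + 2 - j : ℕ) : ZMod (m+1)))
      = f ((I j : ℕ) : ZMod (m+1)) := by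
    intro j hj
    rw [if_neg (by omega), if_neg (by omega)]
    simp only [hI]
    by_cases h2 : j = 2
    · rw [if_pos h2, if_pos h2]
    · rw [if_neg h2, if_neg h2]
      by_cases h3' : j ≤ i + 1
      · rw [if_pos h3', if_pos h3']
      · rw [if_neg h3', if_neg h3']
  have hIle : ∀ j, 2 ≤ j → j ≤ m + 1 → I j ≤ m := by
    intro j h1 h2; simp only [hI]; split_ifs <;> omega
  have hIinj : ∀ a b, 2 ≤ a → a ≤ m + 1 → 2 ≤ b → b ≤ m + 1 → I a = I b → a = b := by
    intro a b ha1 ha2 hb1 hb2 h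
    simp only [hI] at h
    split_ifs at h <;> omega
  refine ⟨fun j => decide (j % 2 = 1), ?_, ?_, ?_⟩
  · -- injectivity
    intro a ha b hb hab
    simp only [Set.mem_Iic] at ha hb
    simp only at hab
    by_cases ha2 : 2 ≤ a <;> by_cases hb2 : 2 ≤ b
    · rw [hP a ha2, hP b hb2] at hab
      exact hIinj a b ha2 ha hb2 hb (hfc _ _ (hIle a ha2 ha) (hIle b hb2 hb) hab)
    · exfalso
      rw [hP a ha2] at hab
      interval_cases b <;> simp only [if_pos rfl, if_neg (by omega : ¬ (1:ℕ) = 0), if_pos rfl] at hab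
      · exact hy ⟨_, hab⟩
      · exact hx ⟨_, hab⟩
    · exfalso
      rw [hP b hb2] at hab
      interval_cases a <;> simp only [if_pos rfl, if_neg (by omega : ¬ (1:ℕ) = 0), if_pos rfl] at hab
      · exact hy ⟨_, hab.symm⟩
      · exact hx ⟨_, hab.symm⟩
    · have ha1 : a = 0 ∨ a = 1 := by omega
      have hb1 : b = 0 ∨ b = 1 := by omega
      rcases ha1 with rfl | rfl <;> rcases hb1 with rfl | rfl
      · rfl
      · norm_num at hab
        exact absurd hab.symm hxy
      · norm_num at hab
        exact absurd hab hxy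
      · rfl
  · -- edges
    intro j hj
    simp only
    have hQ : ∀ k, 3 ≤ k → k ≤ i + 1 →
        (if k = 0 then y else if k = 1 then x else if k = 2 then f (i : ZMod (m+1))
          else if k ≤ i + 1 then f ((k - 3 : ℕ) : ZMod (m+1))
          else f ((m + i + 2 - k : ℕ) : ZMod (m+1)))
        = f ((k - 3 : ℕ) : ZMod (m+1)) := by
      intro k h1 h2
      rw [if_neg (by omega : ¬ k = 0), if_neg (by omega : ¬ k = 1),
          if_neg (by omega : ¬ k = 2), if_pos h2]
    have hR : ∀ k, i + 2 ≤ k →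
        (if k = 0 then y else if k = 1 then x else if k = 2 then f (i : ZMod (m+1))
          else if k ≤ i + 1 then f ((k - 3 : ℕ) : ZMod (m+1))
          else f ((m + i + 2 - k : ℕ) : ZMod (m+1)))
        = f ((m + i + 2 - k : ℕ) : ZMod (m+1)) := by
      intro k h1
      rw [if_neg (by omega : ¬ k = 0), if_neg (by omega : ¬ k = 1),
          if_neg (by omega : ¬ k = 2), if_neg (by omega : ¬ k ≤ i + 1)]
    rcases Nat.lt_or_ge j 3 with hj3 | hj3
    · interval_cases j
      · norm_num
        exact e6
      · norm_num
        exact e5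
      · norm_num
        rw [if_pos (by omega : (3:ℕ) ≤ i + 1)]
        simpa using e3
    · rcases Nat.lt_or_ge j (i+1) with hji | hji
      · -- forward segment: 3 ≤ j ≤ i
        rw [hQ j (by omega) (by omega), hQ (j+1) (by omega) (by omega),
            show j + 1 - 3 = (j - 3) + 1 from by omega]
        rcases Nat.mod_two_eq_zero_or_one j with hp | hp
        · rw [if_neg (by simp [hp])]
          exact hbwd (j - 3) (by omega)
        · rw [if_pos (by simp [hp])]
          exact hfwd (j - 3) (by omega)
      · rcases Nat.eq_or_lt_of_le hji with hji1 | hji1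
        · -- j = i + 1
          subst hji1
          rw [hQ (i+1) (by omega) (by omega), hR (i+1+1) (by omega),
              show i + 1 - 3 = i - 2 from by omega,
              show m + i + 2 - (i + 1 + 1) = m from by omega]
          rw [if_pos (by simp [Nat.add_mod, hie])]
          exact e4
        · -- reverse segment: i + 2 ≤ j ≤ m
          rw [hR j (by omega), hR (j+1) (by omega),
              show m + i + 2 - (j + 1) = m + i + 1 - j from by omega,
              show m + i + 2 - j = (m + i + 1 - j) + 1 from by omega]
          rcases Nat.mod_two_eq_zero_or_one j with hp | hp
          · rw [if_neg (by simp [hp])]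
            exact hfwd (m + i + 1 - j) (by omega)
          · rw [if_pos (by simp [hp])]
            exact hbwd (m + i + 1 - j) (by omega)
  · -- alternation
    intro j _
    rcases Nat.mod_two_eq_zero_or_one j with h | h <;>
      simp [h, Nat.add_mod, -Nat.add_mod_right]
end
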